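/- Let A = (Q,q0,δ,F) be a reachable DFA over a preordered alphabet Σ whose recognized language is upwards-closed for the subword ordering. Then every accepting state q ∈ F satisfies δ*(w,q) ∈ F for every word w; consequently every accepting state is a maximum for the canonical quasi-order (q' ⊑ q for all q' ∈ Q), and if moreover any two distinct states of A are distinguishable (for q ≠ q' there is a word w with exactly one of δ*(w,q) ∈ F, δ*(w,q') ∈ F), then A has at most one accepting state. -/

import Mathlib

/-!
If a word `u` leads to an accepting state `q`, then `u` is a subword of `u ++ w`, so upward
closure of the language makes `u ++ w` accepted, i.e. `δ*(w, q) ∈ F`; reachability makes every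
accepting state such a `δ*(u, q0)`. A state from which every word is accepted dominates every
state in the canonical quasi-order, and no word distinguishes two such states.
-/

/-- Extension of a transition function `δ : Σ × Q → Q` to words:
`δ*(ε,q) = q` and `δ*(wσ,q) = δ(σ, δ*(w,q))`. -/
def deltaStar {σ Q : Type*} (δ : σ → Q → Q) (w : List σ) (q : Q) : Q :=
  w.foldl (fun p a => δ a p) q

/-- The canonical quasi-order on the states of a DFA:
`q ⊑ q'` iff for every word `w`, `δ*(w,q) ∈ F` implies `δ*(w,q') ∈ F`. -/
def canQO {σ Q : Type*} (δ : σ → Q → Q) (F : Set Q) (q q' : Q) : Prop :=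
  ∀ w : List σ, deltaStar δ w q ∈ F → deltaStar δ w q' ∈ F

section DFA

variable {σ Q : Type*} {q0 : Q} {δ : σ → Q → Q} {F : Set Q}

theorem deltaStar_append (u w : List σ) (q : Q) :
    deltaStar δ (u ++ w) q = deltaStar δ w (deltaStar δ u q) :=
  List.foldl_append

theorem deltaStar_append_mem_of_upwardClosed [Preorder σ]
    (hup : ∀ w w' : List σ, deltaStar δ w q0 ∈ F →
      List.SublistForall₂ (· ≤ ·) w w' → deltaStar δ w' q0 ∈ F)
    {u : List σ} (hu : deltaStar δ u q0 ∈ F) (w : List σ) :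
    deltaStar δ (u ++ w) q0 ∈ F :=
  hup u (u ++ w) hu (List.sublist_append_left u w).sublistForall₂

theorem deltaStar_mem_of_append_closed (hreach : ∀ q : Q, ∃ u : List σ, deltaStar δ u q0 = q)
    (hext : ∀ u : List σ, deltaStar δ u q0 ∈ F → ∀ w, deltaStar δ (u ++ w) q0 ∈ F)
    {q : Q} (hq : q ∈ F) (w : List σ) : deltaStar δ w q ∈ F := by
  obtain ⟨u, rfl⟩ := hreach q
  simpa only [deltaStar_append] using hext u hq w

theorem canQO_of_forall_deltaStar_mem {q : Q} (hq : ∀ w : List σ, deltaStar δ w q ∈ F)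
    (q' : Q) : canQO δ F q' q :=
  fun w _ => hq w

theorem eq_of_forall_deltaStar_mem
    (hdist : ∀ q q' : Q, q ≠ q' →
      ∃ w : List σ, Xor (deltaStar δ w q ∈ F) (deltaStar δ w q' ∈ F))
    {q q' : Q} (hq : ∀ w, deltaStar δ w q ∈ F) (hq' : ∀ w, deltaStar δ w q' ∈ F) :
    q = q' := by
  by_contra hne
  obtain ⟨w, hw⟩ := hdist q q' hne
  exact hw.elim (fun h => h.2 (hq' w)) (fun h => h.2 (hq w))

end DFA

/-- In a reachable DFA recognizing an upwards-closed language, every accepting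
state sends every word to an accepting state, is a maximum for the canonical
quasi-order, and if distinct states are distinguishable there is at most one
accepting state. -/
theorem accepting_state_maximum {σ Q : Type*} [Preorder σ]
    (q0 : Q) (δ : σ → Q → Q) (F : Set Q)
    (hreach : ∀ q : Q, ∃ u : List σ, deltaStar δ u q0 = q)
    (hup : ∀ w w' : List σ, deltaStar δ w q0 ∈ F →
      List.SublistForall₂ (· ≤ ·) w w' → deltaStar δ w' q0 ∈ F) :
    (∀ q ∈ F, ∀ w : List σ, deltaStar δ w q ∈ F) ∧
    (∀ q ∈ F, ∀ q' : Q, canQO δ F q' q) ∧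
    ((∀ q q' : Q, q ≠ q' →
        ∃ w : List σ, Xor' (deltaStar δ w q ∈ F) (deltaStar δ w q' ∈ F)) →
      ∀ q ∈ F, ∀ q' ∈ F, q = q') := by
  have absorbing : ∀ q ∈ F, ∀ w : List σ, deltaStar δ w q ∈ F := fun q hq =>
    deltaStar_mem_of_append_closed hreach
      (fun _ hu => deltaStar_append_mem_of_upwardClosed hup hu) hq
  exact ⟨absorbing,
    fun q hq => canQO_of_forall_deltaStar_mem (absorbing q hq),
    fun hdist q hq q' hq' => eq_of_forall_deltaStar_mem hdist (absorbing q hq) (absorbing q' hq')⟩
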